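/- arXiv:1702.00046 — 2 statements merged into one kernel-verified Lean document; each statement's English description precedes it below -/
import Mathlib

section
/- If 0 < q1 < q2 < 1, 0 < A < B, and α ∈ (0,1), then λ̃ = (1-α)·(B - A)/((1-q2)·B + q1·A) is strictly positive, and the updated values (1 + λ̃·q1)·A and (1 - λ̃·(1-q2))·B satisfy (1 + λ̃·q1)·A < (1 - λ̃·(1-q2))·B. -/
/-! The update moves `A` up by `λ̃ q₁ A` and `B` down by `λ̃ (1 - q₂) B`, so it shrinks the gap
`B - A` by `λ̃ ((1 - q₂) B + q₁ A)`. The step size is chosen so that this is exactly `(1 - α) (B - A)`: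
the new gap is `α (B - A) > 0`. -/

lemma mdumiqe_denom_pos {q1 q2 A B : ℝ} (hq1 : 0 < q1) (hq2 : q2 ≤ 1) (hA : 0 < A) (hB : 0 ≤ B) :
    0 < (1 - q2) * B + q1 * A :=
  add_pos_of_nonneg_of_pos (mul_nonneg (sub_nonneg.2 hq2) hB) (mul_pos hq1 hA)

lemma mdumiqe_update_gap_eq {q1 q2 A B α lam : ℝ}
    (hlam : lam * ((1 - q2) * B + q1 * A) = (1 - α) * (B - A)) :
    (1 - lam * (1 - q2)) * B - (1 + lam * q1) * A = α * (B - A) := by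
  linear_combination -hlam

theorem mdumiqe_step_positive_and_monotone_general
    (q1 q2 A B α lam : ℝ)
    (hq1 : 0 < q1) (hq2 : q2 < 1)
    (hA : 0 < A) (hAB : A < B)
    (hα : 0 < α) (hα1 : α < 1)
    (hlam : lam = (1 - α) * (B - A) / ((1 - q2) * B + q1 * A)) :
    0 < lam ∧ (1 + lam * q1) * A < (1 - lam * (1 - q2)) * B := by
  have hD := mdumiqe_denom_pos hq1 hq2.le hA (hA.trans hAB).le
  have hstep : lam * ((1 - q2) * B + q1 * A) = (1 - α) * (B - A) := by
    rw [hlam, div_mul_cancel₀ _ hD.ne']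
  refine ⟨hlam ▸ div_pos (mul_pos (sub_pos.2 hα1) (sub_pos.2 hAB)) hD, ?_⟩
  linarith [mdumiqe_update_gap_eq hstep, mul_pos hα (sub_pos.2 hAB)]

/-- MDUMIQE: the chosen step size λ̃ is strictly positive and the multiplicative
update preserves the strict monotone ordering of the two quantile estimates. -/
theorem mdumiqe_step_positive_and_monotone
    (q1 q2 A B α lam : ℝ)
    (hq1 : 0 < q1) (hq12 : q1 < q2) (hq2 : q2 < 1)
    (hA : 0 < A) (hAB : A < B)
    (hα : 0 < α) (hα1 : α < 1)
    (hlam : lam = (1 - α) * (B - A) / ((1 - q2) * B + q1 * A)) :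
    0 < lam ∧ (1 + lam * q1) * A < (1 - lam * (1 - q2)) * B :=
  mdumiqe_step_positive_and_monotone_general q1 q2 A B α lam hq1 hq2 hA hAB hα hα1 hlam
end

section
/- Let 0 < q_{k-1} < q_k < q_{k+1} < 1 and 0 < A < M < B with A, M, B positive reals, α ∈ (0,1). Define λ̃ = (1-α)·min{ (M - A)/((1-q_k)·M + q_{k-1}·A), (B - M)/((1-q_{k+1})·B + q_k·M) }. Then for any λ with 0 ≤ λ ≤ λ̃, both (1 + λ·q_k)·M < (1 - λ·(1-q_{k+1}))·B and (1 + λ·q_{k-1})·A < (1 - λ·(1-q_k))·M hold. -/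
/-- MDUMIQE middle-estimate update: with λ̃ the minimum of the two pairwise
gap ratios (scaled by 1-α), any step 0 ≤ λ ≤ λ̃ preserves the strict ordering
with both the neighbour below and the neighbour above. -/
theorem mdumiqe_middle_preserves_order
    (q0 q1 q2 A M B α lam_tilde : ℝ)
    (hq0 : 0 < q0) (hq01 : q0 < q1) (hq12 : q1 < q2) (hq2 : q2 < 1)
    (hA : 0 < A) (hAM : A < M) (hMB : M < B)
    (hα : 0 < α) (hα1 : α < 1)
    (hlam : lam_tilde = (1 - α) *
      min ((M - A) / ((1 - q1) * M + q0 * A))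
          ((B - M) / ((1 - q2) * B + q1 * M))) :
    ∀ lam : ℝ, 0 ≤ lam → lam ≤ lam_tilde →
      (1 + lam * q1) * M < (1 - lam * (1 - q2)) * B ∧
      (1 + lam * q0) * A < (1 - lam * (1 - q1)) * M := by
  intro lam hl0 hl
  have hD1 : 0 < (1 - q1) * M + q0 * A := by nlinarith
  have hD2 : 0 < (1 - q2) * B + q1 * M := by nlinarith
  set r1 := (M - A) / ((1 - q1) * M + q0 * A) with hr1def
  set r2 := (B - M) / ((1 - q2) * B + q1 * M) with hr2def
  have hr1 : 0 < r1 := div_pos (by linarith) hD1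
  have hr2 : 0 < r2 := div_pos (by linarith) hD2
  have hmin : 0 < min r1 r2 := lt_min hr1 hr2
  have hshrink : (1 - α) * min r1 r2 < min r1 r2 := by
    nlinarith [mul_pos hα hmin]
  have hlt1 : lam < r1 :=
    lt_of_le_of_lt hl (hlam ▸ lt_of_lt_of_le hshrink (min_le_left r1 r2))
  have hlt2 : lam < r2 :=
    lt_of_le_of_lt hl (hlam ▸ lt_of_lt_of_le hshrink (min_le_right r1 r2))
  have h1 : lam * ((1 - q1) * M + q0 * A) < M - A := (lt_div_iff₀ hD1).mp hlt1
  have h2 : lam * ((1 - q2) * B + q1 * M) < B - M := (lt_div_iff₀ hD2).mp hlt2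
  constructor <;> nlinarith
end
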